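/- Let 𝔽 be a field and F = F_d + F_{d−γ₁} + ⋯ + F_{d−γ_m} ∈ 𝔽[X₁,…,Xₙ], where F_d and each F_{d−γ_i} are nonzero homogeneous polynomials of degrees d = deg F and d−γ_i respectively, with 0 < γ₁ < ⋯ < γ_m ≤ d, and these are all the nonzero homogeneous components of F. Let k ∈ {1, …, m} be such that γ_k ∉ span_ℕ{γ₁, …, γ_{k−1}}, and assume F_d is squarefree. Suppose F = P·Q with P, Q nonzero of degrees s and t. Then for every natural number i with 0 < i < γ_k and i ∉ span_ℕ{γ₁, …, γ_{k−1}}, the homogeneous component of P in degree s−i and the homogeneous component of Q in degree t−i are both zero. -/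

import Mathlib

/-!
The degree-`(d - i)` component of `F = P * Q` is `∑_{a + b = i} P_{s-a} Q_{t-b}`.
Induct on `i ∉ S := span_ℕ{γ₁, …, γ_{k-1}}`: for `0 < a < i`, either `a ∉ S` and
`P_{s-a} = 0`, or `a ∈ S`, so `i - a ∉ S` and `Q_{t-(i-a)} = 0`. Since `F` has no component
in degree `d - i`, this leaves `P_{s-i} Q_t + P_s Q_{t-i} = 0`. The leading forms `P_s`, `Q_t`
are coprime because their product `F_d` is squarefree, so `P_s ∣ P_{s-i}` and `Q_t ∣ Q_{t-i}`,
which forces both to vanish for degree reasons.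
-/

/-- The homogeneous component of a multivariate polynomial in an integer degree `j`:
it is the usual homogeneous component for `j ≥ 0`, and `0` for negative `j`. -/
noncomputable def homComponentZ {n : ℕ} {𝔽 : Type*} [Field 𝔽]
    (P : MvPolynomial (Fin n) 𝔽) (j : ℤ) : MvPolynomial (Fin n) 𝔽 :=
  if 0 ≤ j then MvPolynomial.homogeneousComponent j.toNat P else 0

open MvPolynomial
open Finset

namespace MvPolynomial
variable {σ R : Type*}

attribute [local instance] MvPolynomial.gradedAlgebra in
theorem homogeneousComponent_mul [CommSemiring R] (P Q : MvPolynomial σ R) (c : ℕ) :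
    homogeneousComponent c (P * Q) =
      ∑ x ∈ antidiagonal c, homogeneousComponent x.1 P * homogeneousComponent x.2 Q := by
  have hdec (φ : MvPolynomial σ R) (i : ℕ) :
      homogeneousComponent i φ = DirectSum.decompose (homogeneousSubmodule σ R) φ i :=
    (decomposition.decompose'_apply φ i).symm
  simp only [hdec, DirectSum.decompose_mul, DirectSum.coe_mul_apply_eq_sum_antidiagonal]

theorem IsHomogeneous.eq_zero_of_dvd [CommRing R] [IsDomain R] {A X : MvPolynomial σ R}
    {a b : ℕ} (hA : A.IsHomogeneous a) (hX : X.IsHomogeneous b) (hba : b < a) (h : A ∣ X) :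
    X = 0 := by
  obtain ⟨c, rfl⟩ := h
  by_contra hne
  obtain ⟨hA0, hc0⟩ := mul_ne_zero_iff.mp hne
  have := totalDegree_mul_of_isDomain hA0 hc0
  rw [hX.totalDegree hne, hA.totalDegree hA0] at this
  omega

theorem le_totalDegree_of_homogeneousComponent_ne_zero [CommSemiring R] {P : MvPolynomial σ R}
    {a : ℕ} (h : homogeneousComponent a P ≠ 0) : a ≤ P.totalDegree :=
  not_lt.mp fun ha => h (homogeneousComponent_eq_zero a P ha)

end MvPolynomial

theorem IsRelPrime.dvd_and_dvd_of_mul_add_mul_eq_zero {R : Type*} [CommRing R]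
    [DecompositionMonoid R] {A B X Y : R} (h : IsRelPrime A B) (hXY : X * B + A * Y = 0) :
    A ∣ X ∧ B ∣ Y :=
  ⟨h.dvd_of_dvd_mul_right ⟨-Y, by linear_combination hXY⟩,
    h.symm.dvd_of_dvd_mul_left ⟨-X, by linear_combination hXY⟩⟩

section homComponentZ
variable {n : ℕ} {𝔽 : Type*} [Field 𝔽]

@[simp]
theorem homComponentZ_natCast (P : MvPolynomial (Fin n) 𝔽) (j : ℕ) :
    homComponentZ P j = homogeneousComponent j P := by
  simp [homComponentZ]

theorem homComponentZ_of_neg (P : MvPolynomial (Fin n) 𝔽) {j : ℤ} (hj : j < 0) :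
    homComponentZ P j = 0 :=
  if_neg (by omega)

theorem homComponentZ_sub_natCast (P : MvPolynomial (Fin n) 𝔽) {a b : ℕ} (h : b ≤ a) :
    homComponentZ P (a - b) = homogeneousComponent (a - b) P := by
  rw [← homComponentZ_natCast, Nat.cast_sub h]

theorem homComponentZ_mul_sub (P Q : MvPolynomial (Fin n) 𝔽) (i : ℕ) :
    homComponentZ (P * Q) (P.totalDegree + Q.totalDegree - i) =
      ∑ x ∈ antidiagonal i,
        homComponentZ P (P.totalDegree - x.1) * homComponentZ Q (Q.totalDegree - x.2) := by
  set s := P.totalDegree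
  set t := Q.totalDegree
  have hboundsZ {a b : ℕ} (h : homComponentZ P (s - a) * homComponentZ Q (t - b) ≠ 0) :
      a ≤ s ∧ b ≤ t := by
    constructor <;> by_contra! hlt
    · exact h (by rw [homComponentZ_of_neg P (by omega), zero_mul])
    · exact h (by rw [homComponentZ_of_neg Q (by omega), mul_zero])
  have hbounds {a b : ℕ} (h : homogeneousComponent a P * homogeneousComponent b Q ≠ 0) :
      a ≤ s ∧ b ≤ t :=
    ⟨le_totalDegree_of_homogeneousComponent_ne_zero (left_ne_zero_of_mul h),
      le_totalDegree_of_homogeneousComponent_ne_zero (right_ne_zero_of_mul h)⟩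
  rcases lt_or_ge (s + t) i with hi | hi
  · rw [homComponentZ_of_neg _ (by omega)]
    refine (sum_eq_zero fun x hx => ?_).symm
    by_contra h
    have := hboundsZ h
    rw [HasAntidiagonal.mem_antidiagonal] at hx
    omega
  rw [show (s + t - i : ℤ) = (s + t - i : ℕ) by omega, homComponentZ_natCast,
    homogeneousComponent_mul]
  refine sum_bij_ne_zero (fun x _ _ => (s - x.1, t - x.2)) ?_ ?_ ?_ ?_
  · intro x hx h
    have := hbounds h
    rw [HasAntidiagonal.mem_antidiagonal] at hx ⊢
    omega
  · intro x hx h y hy h' hxy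
    have := hbounds h
    have := hbounds h'
    rw [HasAntidiagonal.mem_antidiagonal] at hx hy
    simp only [Prod.mk.injEq] at hxy
    ext <;> omega
  · intro y hy h
    obtain ⟨h1, h2⟩ := hboundsZ h
    rw [HasAntidiagonal.mem_antidiagonal] at hy
    refine ⟨(s - y.1, t - y.2), by rw [HasAntidiagonal.mem_antidiagonal]; omega, ?_,
      by ext <;> simp <;> omega⟩
    rwa [← homComponentZ_sub_natCast P h1, ← homComponentZ_sub_natCast Q h2]
  · intro x _ h
    obtain ⟨h1, h2⟩ := hbounds h
    rw [homComponentZ_sub_natCast _ (Nat.sub_le _ _), homComponentZ_sub_natCast _ (Nat.sub_le _ _),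
      Nat.sub_sub_self h1, Nat.sub_sub_self h2]

theorem homogeneousComponent_totalDegree_add_mul (P Q : MvPolynomial (Fin n) 𝔽) :
    homogeneousComponent (P.totalDegree + Q.totalDegree) (P * Q) =
      homogeneousComponent P.totalDegree P * homogeneousComponent Q.totalDegree Q := by
  rw [← homComponentZ_natCast, Nat.cast_add]
  simpa using homComponentZ_mul_sub P Q 0

theorem homComponentZ_eq_zero_of_dvd (P : MvPolynomial (Fin n) 𝔽) {A : MvPolynomial (Fin n) 𝔽}
    {a : ℕ} (hA : A.IsHomogeneous a) {j : ℤ} (hj : j < a) (h : A ∣ homComponentZ P j) :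
    homComponentZ P j = 0 := by
  unfold homComponentZ at *
  split_ifs at * with hj0
  · exact hA.eq_zero_of_dvd (homogeneousComponent_isHomogeneous _ _) (by omega) h
  · rfl

theorem homComponentZ_sub_eq_zero_of_isRelPrime {P Q : MvPolynomial (Fin n) 𝔽}
    (hrel : IsRelPrime (homogeneousComponent P.totalDegree P)
      (homogeneousComponent Q.totalDegree Q))
    {S : AddSubmonoid ℕ} {N : ℕ}
    (hgap : ∀ i, 0 < i → i < N → i ∉ S →
      homComponentZ (P * Q) (P.totalDegree + Q.totalDegree - i) = 0)
    {i : ℕ} (hi0 : 0 < i) (hiN : i < N) (hiS : i ∉ S) :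
    homComponentZ P (P.totalDegree - i) = 0 ∧ homComponentZ Q (Q.totalDegree - i) = 0 := by
  induction i using Nat.strong_induction_on with
  | _ i IH =>
  set s := P.totalDegree
  set t := Q.totalDegree
  have hmiddle : ∀ x ∈ antidiagonal i, x ≠ (i, 0) → x ≠ (0, i) →
      homComponentZ P (s - x.1) * homComponentZ Q (t - x.2) = 0 := by
    rintro ⟨a, b⟩ hx hne₁ hne₂
    rw [HasAntidiagonal.mem_antidiagonal] at hx
    simp only [ne_eq, Prod.mk.injEq, not_and] at hne₁ hne₂
    by_cases haS : a ∈ S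
    · have hbS : b ∉ S := fun hbS => hiS (hx ▸ S.add_mem haS hbS)
      rw [(IH b (by omega) (by omega) (by omega) hbS).2, mul_zero]
    · rw [(IH a (by omega) (by omega) (by omega) haS).1, zero_mul]
  have hends : homComponentZ P (s - i) * homogeneousComponent t Q +
      homogeneousComponent s P * homComponentZ Q (t - i) = 0 := by
    rw [← hgap i hi0 hiN hiS, homComponentZ_mul_sub, sum_eq_add_of_mem (i, 0) (0, i)
      (by simp) (by simp) (by simp [hi0.ne']) fun x hx hne => hmiddle x hx hne.1 hne.2]
    simp
  obtain ⟨hdvdP, hdvdQ⟩ := hrel.dvd_and_dvd_of_mul_add_mul_eq_zero hends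
  exact ⟨homComponentZ_eq_zero_of_dvd P (homogeneousComponent_isHomogeneous s P) (by omega) hdvdP,
    homComponentZ_eq_zero_of_dvd Q (homogeneousComponent_isHomogeneous t Q) (by omega) hdvdQ⟩

end homComponentZ

theorem components_vanish_below_gap_general {n m : ℕ} {𝔽 : Type*} [Field 𝔽]
    (F Fd : MvPolynomial (Fin n) 𝔽) (G : Fin (m + 1) → MvPolynomial (Fin n) 𝔽)
    (d : ℕ) (γ : Fin (m + 1) → ℕ)
    (hF : F = Fd + ∑ i, G i)
    (hdeg : F.totalDegree = d)
    (hFd : Fd.IsHomogeneous d)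
    (hG : ∀ i, (G i).IsHomogeneous (d - γ i))
    (hpos : 0 < γ 0) (hmono : StrictMono γ) (hle : γ (Fin.last m) ≤ d)
    (k : Fin (m + 1))
    (hsf : Squarefree Fd)
    (P Q : MvPolynomial (Fin n) 𝔽) (hP0 : P ≠ 0) (hQ0 : Q ≠ 0)
    (hPQ : F = P * Q) :
    ∀ i : ℕ, 0 < i → i < γ k → i ∉ AddSubmonoid.closure (γ '' {j | j < k}) →
      homComponentZ P ((P.totalDegree : ℤ) - i) = 0 ∧
        homComponentZ Q ((Q.totalDegree : ℤ) - i) = 0 := by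
  have hst : P.totalDegree + Q.totalDegree = d := by
    rw [← hdeg, hPQ, totalDegree_mul_of_isDomain hP0 hQ0]
  have hγ (l : Fin (m + 1)) : 0 < γ l ∧ γ l ≤ d :=
    ⟨hpos.trans_le (hmono.monotone (Fin.zero_le l)), (hmono.monotone (Fin.le_last l)).trans hle⟩
  have hcompF (c : ℕ) : homogeneousComponent c F =
      (if c = d then Fd else 0) + ∑ l, if c = d - γ l then G l else 0 := by
    simp only [hF, map_add, map_sum, homogeneousComponent_of_mem hFd,
      homogeneousComponent_of_mem (hG _)]
  have hlead :
      Fd = homogeneousComponent P.totalDegree P * homogeneousComponent Q.totalDegree Q := by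
    rw [← homogeneousComponent_totalDegree_add_mul, ← hPQ, hst, hcompF, if_pos rfl,
      sum_eq_zero fun l _ => if_neg (by have := hγ l; omega), add_zero]
  refine fun i hi0 hik hiS => homComponentZ_sub_eq_zero_of_isRelPrime
    (IsRelPrime.of_squarefree_mul (hlead ▸ hsf)) (fun j _ hjk hjS => ?_) hi0 hik hiS
  have hjd : j ≤ d := hjk.le.trans (hγ k).2
  have hγj (l : Fin (m + 1)) : γ l ≠ j := by
    rintro rfl
    rcases lt_or_ge l k with hlk | hkl
    · exact hjS (AddSubmonoid.subset_closure ⟨l, hlk, rfl⟩)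
    · exact hjk.not_ge (hmono.monotone hkl)
  rw [← hPQ, ← Nat.cast_add, hst, homComponentZ_sub_natCast _ hjd, hcompF, if_neg (by omega),
    sum_eq_zero fun l _ => if_neg (by have := hγ l; have := hγj l; omega), add_zero]

/-- If `γ_k ∉ span_ℕ{γ₁, …, γ_{k−1}}`, `F_d` is squarefree and `F = P·Q`, then for every
`i` with `0 < i < γ_k` and `i ∉ span_ℕ{γ₁, …, γ_{k−1}}`, the homogeneous components
`P_{s−i}` and `Q_{t−i}` both vanish, where `s = deg P`, `t = deg Q`. -/
theorem components_vanish_below_gap {n m : ℕ} {𝔽 : Type*} [Field 𝔽]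
    (F Fd : MvPolynomial (Fin n) 𝔽) (G : Fin (m + 1) → MvPolynomial (Fin n) 𝔽)
    (d : ℕ) (γ : Fin (m + 1) → ℕ)
    (hF : F = Fd + ∑ i, G i)
    (hdeg : F.totalDegree = d)
    (hFd : Fd.IsHomogeneous d) (hFd0 : Fd ≠ 0)
    (hG : ∀ i, (G i).IsHomogeneous (d - γ i)) (hG0 : ∀ i, G i ≠ 0)
    (hpos : 0 < γ 0) (hmono : StrictMono γ) (hle : γ (Fin.last m) ≤ d)
    (k : Fin (m + 1))
    (hspan : γ k ∉ AddSubmonoid.closure (γ '' {j | j < k}))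
    (hsf : Squarefree Fd)
    (P Q : MvPolynomial (Fin n) 𝔽) (hP0 : P ≠ 0) (hQ0 : Q ≠ 0)
    (hPQ : F = P * Q) :
    ∀ i : ℕ, 0 < i → i < γ k → i ∉ AddSubmonoid.closure (γ '' {j | j < k}) →
      homComponentZ P ((P.totalDegree : ℤ) - i) = 0 ∧
        homComponentZ Q ((Q.totalDegree : ℤ) - i) = 0 :=
  components_vanish_below_gap_general F Fd G d γ hF hdeg hFd hG hpos hmono hle k hsf P Q hP0 hQ0 hPQ
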